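/- arXiv:1109.5280 — 2 statements merged into one kernel-verified Lean document; each statement's English description precedes it below -/
import Mathlib

section
/- If θ < d_c, then the function c(g) defined by c(g) = μ·(ℓ(g) - d_c + √((ℓ(g) - d_c)² + 4(d_c - θ)ℓ(g))) / (2(d_c - θ)ℓ(g)) is strictly increasing on (0, ∞). -/
/-!
Rationalising the numerator turns `c` into `2μ / (√D - ℓ + d_c)` with
`D = (ℓ - d_c)² + 4(d_c - θ)ℓ = t² + 4(d_c - θ)θ`, where `t = ℓ + d_c - 2θ`.
The denominator is thus `√(t² + b) - t + 2(d_c - θ)` with `b > 0`, and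
`t ↦ √(t² + b) - t` is positive and strictly decreasing.
-/

open Set

lemma lt_sqrt_sq_add {b : ℝ} (hb : 0 < b) (t : ℝ) : t < √(t ^ 2 + b) :=
  Real.lt_sqrt_of_sq_lt (by linarith)

lemma strictAnti_sqrt_sq_add_sub {b : ℝ} (hb : 0 < b) :
    StrictAnti fun t : ℝ => √(t ^ 2 + b) - t := by
  intro u v huv
  show √(v ^ 2 + b) - v < √(u ^ 2 + b) - u
  have hu := lt_sqrt_sq_add hb u
  have hsq : √(u ^ 2 + b) ^ 2 = u ^ 2 + b := Real.sq_sqrt (by positivity)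
  -- after squaring, this is `(v - u) * u < (v - u) * √(u² + b)`
  have : √(v ^ 2 + b) < √(u ^ 2 + b) + (v - u) := by
    rw [Real.sqrt_lt' (by linarith [Real.sqrt_nonneg (u ^ 2 + b)])]
    nlinarith [mul_lt_mul_of_pos_left hu (sub_pos.mpr huv)]
  linarith

lemma add_sqrt_sq_add_div (p : ℝ) {q : ℝ} (hq : 0 < q) :
    (p + √(p ^ 2 + q)) / q = (√(p ^ 2 + q) - p)⁻¹ := by
  have hpos : 0 < √(p ^ 2 + q) - p := sub_pos.mpr (lt_sqrt_sq_add hq p)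
  have hsq : √(p ^ 2 + q) ^ 2 = p ^ 2 + q := Real.sq_sqrt (by positivity)
  field_simp
  nlinarith [hsq]

-- `μ z / x`, where `z` is the positive root of `k z² - (x - d) z - x = 0`.
lemma strictMonoOn_positive_root_ratio {μ k d : ℝ} (hμ : 0 < μ) (hk : 0 < k) (hkd : k < d) :
    StrictMonoOn (fun x => μ * (x - d + √((x - d) ^ 2 + 4 * k * x)) / (2 * k * x)) (Ioi 0) := by
  set b := 4 * k * (d - k) with hb_def
  have hb : 0 < b := by have := sub_pos.mpr hkd; positivity
  have hform : ∀ x, 0 < x → μ * (x - d + √((x - d) ^ 2 + 4 * k * x)) / (2 * k * x)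
      = 2 * μ / (√((x - d + 2 * k) ^ 2 + b) - (x - d + 2 * k) + 2 * k) := by
    intro x hx
    have hq : 0 < 4 * k * x := by positivity
    have hD : (x - d) ^ 2 + 4 * k * x = (x - d + 2 * k) ^ 2 + b := by
      rw [hb_def]; ring
    calc μ * (x - d + √((x - d) ^ 2 + 4 * k * x)) / (2 * k * x)
        = 2 * μ * ((x - d + √((x - d) ^ 2 + 4 * k * x)) / (4 * k * x)) := by
          field_simp; ring
      _ = 2 * μ / (√((x - d + 2 * k) ^ 2 + b) - (x - d + 2 * k) + 2 * k) := by
          rw [add_sqrt_sq_add_div _ hq, hD]; ring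
  intro x hx y hy hxy
  simp only [hform x hx, hform y hy]
  have hψ := strictAnti_sqrt_sq_add_sub hb (show x - d + 2 * k < y - d + 2 * k by linarith)
  have hψ_pos := sub_pos.mpr (lt_sqrt_sq_add hb (y - d + 2 * k))
  gcongr 2 * μ / ?_
  simpa using hψ

theorem stmt_4_general (α μ ν θ db dc : ℝ) (hα : 0 < α) (hμ : 0 < μ) (hν : 0 < ν)
    (hθ : 0 < θ) (hdb : 0 < db) (hlt : θ < dc)
    (ℓ c : ℝ → ℝ) (hℓ : ∀ g, ℓ g = α * μ / (db + ν) * g)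
    (hc : ∀ g, c g = μ * (ℓ g - dc + Real.sqrt ((ℓ g - dc) ^ 2 + 4 * (dc - θ) * ℓ g)) /
      (2 * (dc - θ) * ℓ g)) :
    StrictMonoOn c (Ioi 0) := by
  have hslope : 0 < α * μ / (db + ν) := by positivity
  have hℓ_pos : ∀ g ∈ Ioi (0 : ℝ), ℓ g ∈ Ioi 0 := fun g hg => by
    rw [mem_Ioi, hℓ]; exact mul_pos hslope hg
  intro a ha b hb hab
  rw [hc, hc]
  refine strictMonoOn_positive_root_ratio hμ (sub_pos.mpr hlt) (by linarith)
    (hℓ_pos a ha) (hℓ_pos b hb) ?_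
  rw [hℓ, hℓ]
  exact mul_lt_mul_of_pos_left hab hslope

theorem stmt_4 (α μ ν θ db dc : ℝ) (hα : 0 < α) (hμ : 0 < μ) (hν : 0 < ν)
    (hθ : 0 < θ) (hdb : 0 < db) (hdc : 0 < dc) (hlt : θ < dc)
    (ℓ c : ℝ → ℝ) (hℓ : ∀ g, ℓ g = α * μ / (db + ν) * g)
    (hc : ∀ g, c g = μ * (ℓ g - dc + Real.sqrt ((ℓ g - dc) ^ 2 + 4 * (dc - θ) * ℓ g)) /
      (2 * (dc - θ) * ℓ g)) :
    StrictMonoOn c (Ioi 0) :=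
  stmt_4_general α μ ν θ db dc hα hμ hν hθ hdb hlt ℓ c hℓ hc
end

section
/- If θ > d_c, then the discriminant D(g) = μ²((ℓ(g) - d_c)² - 4(θ - d_c)ℓ(g)) is nonnegative for g ∈ (0, g*], where g* = ((d_b+ν)/(αμ))·(√θ - √(θ - d_c))², and g* is the smallest positive zero of D. -/
/-! With `a = √θ` and `b = √(θ - d_c)` the quadratic `Q x = (x - d_c)² - 4(θ - d_c)x` has the
roots `(a - b)²` and `(a + b)²`, since their sum is `2(2θ - d_c)` and their product is `d_c²`.
Hence `Q ≥ 0` left of the smaller root `(a - b)²`, and every zero of `Q` lies at or beyond it.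
Because `D g = μ² Q(ℓ g)` with `ℓ` linear of positive slope and `ℓ g* = (a - b)²`, the claims
about `D` follow. -/

open Set Real

lemma sq_sub_sub_mul_eq_mul_sub_sq {θ dc : ℝ} (hθ : 0 ≤ θ) (hdc : dc ≤ θ) (x : ℝ) :
    (x - dc) ^ 2 - 4 * (θ - dc) * x
      = (x - (√θ - √(θ - dc)) ^ 2) * (x - (√θ + √(θ - dc)) ^ 2) := by
  have ha : √θ ^ 2 = θ := sq_sqrt hθ
  have hb : √(θ - dc) ^ 2 = θ - dc := sq_sqrt (sub_nonneg.mpr hdc)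
  linear_combination (2 * x - (dc + √θ ^ 2 - √(θ - dc) ^ 2)) * ha
    + (2 * x + (dc + √θ ^ 2 - √(θ - dc) ^ 2)) * hb

lemma sq_sqrt_sub_sqrt_le_sq_sqrt_add_sqrt (θ dc : ℝ) :
    (√θ - √(θ - dc)) ^ 2 ≤ (√θ + √(θ - dc)) ^ 2 := by
  nlinarith [mul_nonneg (sqrt_nonneg θ) (sqrt_nonneg (θ - dc))]

lemma sq_sub_sub_mul_nonneg_of_le {θ dc x : ℝ} (hθ : 0 ≤ θ) (hdc : dc ≤ θ)
    (hx : x ≤ (√θ - √(θ - dc)) ^ 2) : 0 ≤ (x - dc) ^ 2 - 4 * (θ - dc) * x := by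
  rw [sq_sub_sub_mul_eq_mul_sub_sq hθ hdc]
  exact mul_nonneg_of_nonpos_of_nonpos (by linarith)
    (by linarith [sq_sqrt_sub_sqrt_le_sq_sqrt_add_sqrt θ dc])

lemma sq_sub_sub_mul_eq_zero_at_sq_sqrt_sub_sqrt {θ dc : ℝ} (hθ : 0 ≤ θ) (hdc : dc ≤ θ) :
    ((√θ - √(θ - dc)) ^ 2 - dc) ^ 2 - 4 * (θ - dc) * (√θ - √(θ - dc)) ^ 2 = 0 := by
  rw [sq_sub_sub_mul_eq_mul_sub_sq hθ hdc, sub_self, zero_mul]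

lemma sq_sqrt_sub_sqrt_le_of_sq_sub_sub_mul_eq_zero {θ dc x : ℝ} (hθ : 0 ≤ θ) (hdc : dc ≤ θ)
    (hx : (x - dc) ^ 2 - 4 * (θ - dc) * x = 0) : (√θ - √(θ - dc)) ^ 2 ≤ x := by
  rw [sq_sub_sub_mul_eq_mul_sub_sq hθ hdc] at hx
  rcases mul_eq_zero.mp hx with hx | hx
  · linarith
  · linarith [sq_sqrt_sub_sqrt_le_sq_sqrt_add_sqrt θ dc]

theorem stmt_6 (α μ ν θ db dc : ℝ) (hα : 0 < α) (hμ : 0 < μ) (hν : 0 < ν)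
    (hdc : 0 < dc) (hlt : dc < θ)
    (ℓ D : ℝ → ℝ) (hℓ : ∀ g, ℓ g = α * μ / (db + ν) * g)
    (hD : ∀ g, D g = μ ^ 2 * ((ℓ g - dc) ^ 2 - 4 * (θ - dc) * ℓ g))
    (gs : ℝ) (hgs : gs = (db + ν) / (α * μ) * (Real.sqrt θ - Real.sqrt (θ - dc)) ^ 2)
    (hdb : 0 < db) :
    (∀ g ∈ Ioc 0 gs, 0 ≤ D g) ∧ D gs = 0 ∧ ∀ g, 0 < g → D g = 0 → gs ≤ g := by
  have hθ : 0 ≤ θ := by linarith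
  have hdcθ : dc ≤ θ := hlt.le
  have hslope : 0 < α * μ / (db + ν) := by positivity
  have hℓgs : ℓ gs = (√θ - √(θ - dc)) ^ 2 := by
    rw [hℓ, hgs]
    field_simp
  have hℓ_le_iff (g g' : ℝ) : ℓ g ≤ ℓ g' ↔ g ≤ g' := by
    simp only [hℓ, mul_le_mul_iff_right₀ hslope]
  refine ⟨fun g hg => ?_, ?_, fun g _ hDg => ?_⟩
  · rw [hD]
    refine mul_nonneg (sq_nonneg μ) (sq_sub_sub_mul_nonneg_of_le hθ hdcθ ?_)
    rw [← hℓgs, hℓ_le_iff]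
    exact hg.2
  · rw [hD, hℓgs, sq_sub_sub_mul_eq_zero_at_sq_sqrt_sub_sqrt hθ hdcθ, mul_zero]
  · rw [hD] at hDg
    have hQ := (mul_eq_zero.mp hDg).resolve_left (pow_ne_zero 2 hμ.ne')
    rw [← hℓ_le_iff, hℓgs]
    exact sq_sqrt_sub_sqrt_le_of_sq_sub_sub_mul_eq_zero hθ hdcθ hQ
end
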